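/- arXiv:1809.08981 — 4 statements merged into one kernel-verified Lean document; each statement's English description precedes it below -/
import Mathlib

section
/- Let B be an additive category with arbitrary direct sums and products and A a reflective full subcategory of B (the inclusion has a left adjoint). Then an object of A is pure-injective (in the sense of the Jensen–Lenzing criterion: for every set I the summation map M^(I) → M factors through the natural map M^(I) → M^I) if and only if it is pure-injective as an object of B. -/
open CategoryTheory Limits
open scoped Classical

universe w v v' u u'

noncomputable section

/-- The canonical morphism from the coproduct of `I` copies of `M` to the product of
`I` copies of `M`. -/
def sumToProd {C : Type u} [Category.{v} C] [Preadditive C]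
    [HasCoproducts.{w} C] [HasProducts.{w} C] (M : C) (I : Type w) :
    (∐ fun _ : I => M) ⟶ (∏ᶜ fun _ : I => M) :=
  Limits.Sigma.desc fun i => Pi.lift fun j => if i = j then 𝟙 M else 0

/-- Pure-injectivity in the sense of the Jensen–Lenzing criterion: for every set `I`,
the summation map `M^(I) → M` factors through the canonical map `M^(I) → M^I`. -/
def IsPureInjective {C : Type u} [Category.{v} C] [Preadditive C]
    [HasCoproducts.{w} C] [HasProducts.{w} C] (M : C) : Prop :=
  ∀ I : Type w, ∃ g : (∏ᶜ fun _ : I => M) ⟶ M,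
    sumToProd M I ≫ g = Limits.Sigma.desc fun _ : I => 𝟙 M

/-- Let `B` be an additive category with arbitrary direct sums and
products and `A` a reflective full subcategory of `B` (the fully faithful inclusion `i`
has a left adjoint `L`). Then an object of `A` is pure-injective if and only if it is
pure-injective as an object of `B`. -/
theorem pureInjective_iff_of_reflective
    {A : Type u} {B : Type u'} [Category.{v} A] [Category.{v'} B]
    [Preadditive A] [Preadditive B]
    [HasCoproducts.{w} A] [HasProducts.{w} A]
    [HasCoproducts.{w} B] [HasProducts.{w} B]
    (i : A ⥤ B) [i.Full] [i.Faithful] [i.Additive]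
    (L : B ⥤ A) (adj : L ⊣ i) (M : A) :
    IsPureInjective.{w} M ↔ IsPureInjective.{w} (i.obj M) := by
  have hpres : PreservesLimitsOfSize.{w, w} i := adj.rightAdjoint_preservesLimits
  constructor
  · rintro h I
    obtain ⟨g, hg⟩ := h I
    refine ⟨inv (piComparison i (fun _ : I => M)) ≫ i.map g, ?_⟩
    apply Sigma.hom_ext
    intro k
    have h1 : (Pi.lift fun j : I => if k = j then 𝟙 M else 0) ≫ g = 𝟙 M := by
      have := congrArg (fun t => Sigma.ι (fun _ : I => M) k ≫ t) hg
      simpa [sumToProd] using this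
    have hcomp : i.map (Pi.lift fun j : I => if k = j then 𝟙 M else 0)
        ≫ piComparison i (fun _ : I => M)
        = Pi.lift fun j : I => if k = j then 𝟙 (i.obj M) else 0 := by
      rw [map_lift_piComparison]
      congr 1
      funext j
      split <;> simp
    have h3 : Sigma.ι (fun _ : I => i.obj M) k ≫ sumToProd (i.obj M) I
        = Pi.lift fun j : I => if k = j then 𝟙 (i.obj M) else 0 := by
      simp [sumToProd]
    have h4 : Sigma.ι (fun _ : I => i.obj M) k ≫ Limits.Sigma.desc
        (fun _ : I => 𝟙 (i.obj M)) = 𝟙 (i.obj M) := by simp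
    rw [← Category.assoc, h3, h4, ← hcomp, Category.assoc, IsIso.hom_inv_id_assoc,
      ← i.map_comp, h1, i.map_id]
  · rintro h I
    obtain ⟨g', hg'⟩ := h I
    refine ⟨i.preimage (piComparison i (fun _ : I => M) ≫ g'), ?_⟩
    apply Sigma.hom_ext
    intro k
    have h1 : (Pi.lift fun j : I => if k = j then 𝟙 (i.obj M) else 0) ≫ g'
        = 𝟙 (i.obj M) := by
      have := congrArg (fun t => Sigma.ι (fun _ : I => i.obj M) k ≫ t) hg'
      simpa [sumToProd] using this
    have h2 : Sigma.ι (fun _ : I => M) k ≫ sumToProd M I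
        = Pi.lift fun j : I => if k = j then 𝟙 M else 0 := by
      simp [sumToProd]
    have hcomp : i.map (Pi.lift fun j : I => if k = j then 𝟙 M else 0)
        ≫ piComparison i (fun _ : I => M)
        = Pi.lift fun j : I => if k = j then 𝟙 (i.obj M) else 0 := by
      rw [map_lift_piComparison]
      congr 1
      funext j
      split <;> simp
    have h4 : Sigma.ι (fun _ : I => M) k ≫ Limits.Sigma.desc
        (fun _ : I => 𝟙 M) = 𝟙 M := by simp
    rw [h4, ← Category.assoc, h2]
    apply i.map_injective
    rw [i.map_comp, Functor.map_preimage, i.map_id, ← Category.assoc, hcomp, h1]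
end
end

section
/- A sheaf of O_X-modules on a ringed space X is pure-injective in the category of sheaves of O_X-modules if and only if it is pure-injective in the category of presheaves of O_X-modules. -/
open CategoryTheory Limits
open scoped Classical

universe w v u

noncomputable section

/-- A sheaf of `O_X`-modules on a ringed space `X` is pure-injective in
the category of sheaves of `O_X`-modules if and only if it is pure-injective in the
category of presheaves of `O_X`-modules. -/
theorem sheafOfModules_pureInjective_iff_presheaf_pureInjective
    (X : TopCat.{u}) (R : Sheaf (Opens.grothendieckTopology X) RingCat.{u})
    (M : SheafOfModules.{u} R) :
    IsPureInjective.{u} M ↔ IsPureInjective.{u} ((SheafOfModules.forget R).obj M) := by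
  set F := SheafOfModules.forget R with hF
  -- key : relating `F.map` of the `Pi.lift` to the `Pi.lift` in presheaves
  have key : ∀ (I : Type u) (i : I),
      F.map (Pi.lift fun j : I => if i = j then 𝟙 M else 0) ≫
        piComparison F (fun _ : I => M)
        = Pi.lift fun j : I => if i = j then 𝟙 (F.obj M) else 0 := by
    intro I i
    ext j
    simp [apply_ite F.map]
  constructor
  · intro h I
    obtain ⟨g, hg⟩ := h I
    refine ⟨inv (piComparison F (fun _ : I => M)) ≫ F.map g, ?_⟩
    apply Limits.Sigma.hom_ext
    intro i
    rw [sumToProd, colimit.ι_desc_assoc, colimit.ι_desc]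
    dsimp
    rw [← key I i, Category.assoc, IsIso.hom_inv_id_assoc, ← F.map_comp]
    have : (Pi.lift fun j : I => if i = j then 𝟙 M else 0) ≫ g = 𝟙 M := by
      have := Sigma.ι (fun _ : I => M) i ≫= hg
      rw [sumToProd, colimit.ι_desc_assoc, colimit.ι_desc] at this
      simpa using this
    simp [this]
  · intro h I
    obtain ⟨g, hg⟩ := h I
    refine ⟨(SheafOfModules.fullyFaithfulForget R).preimage
      (piComparison F (fun _ : I => M) ≫ g), ?_⟩
    apply Limits.Sigma.hom_ext
    intro i
    rw [sumToProd, colimit.ι_desc_assoc, colimit.ι_desc]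
    dsimp
    apply F.map_injective
    rw [F.map_comp, Functor.FullyFaithful.map_preimage, ← Category.assoc, key I i,
      F.map_id]
    have := Sigma.ι (fun _ : I => F.obj M) i ≫= hg
    rw [sumToProd, colimit.ι_desc_assoc, colimit.ι_desc] at this
    simpa using this

end
end

section
/- Let N be a pure-injective sheaf of O_X-modules on a ringed space X (pure-injective in the Jensen–Lenzing sense) and U ⊆ X an open set. Then the O_X(U)-module N(U) of sections over U is a pure-injective O_X(U)-module. -/
open CategoryTheory Limits Opposite TopologicalSpace
open scoped Classical

universe w v u

noncomputable section

/-- Pure-injectivity of a module via the Jensen–Lenzing criterion: for every set `I`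
the summation map `M^(I) → M` extends along the inclusion `M^(I) → M^I`. -/
def ModulePureInjective (S : Type u) [Ring S] (M : Type u) [AddCommGroup M]
    [Module S M] : Prop :=
  ∀ I : Type u, ∃ φ : (I → M) →ₗ[S] M, ∀ f : I →₀ M, φ f = f.sum fun _ m => m

/-! Restricted to the `i`-th summand, `sumToProd N I` is the morphism `piSingle N i : N ⟶ N^I`,
so a factorization `g` as in `IsPureInjective` is a common retraction of all `piSingle N i`.
Taking sections over `U` preserves products and zero morphisms, and under the comparison
isomorphism `(N^I)(U) ≅ N(U)^I` it turns `piSingle N i` into `m ↦ Pi.single i m`. Hence `g`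
gives a linear map `N(U)^I → N(U)` fixing every `Pi.single i m`, and by linearity such a map
extends summation. -/

theorem modulePureInjective_iff (S : Type u) [Ring S] (M : Type u) [AddCommGroup M]
    [Module S M] :
    ModulePureInjective S M ↔
      ∀ I : Type u, ∃ φ : (I → M) →ₗ[S] M, ∀ i m, φ (Pi.single i m) = m := by
  refine forall_congr' fun I => exists_congr fun φ => ⟨fun h i m => ?_, fun h => ?_⟩
  · simpa [Finsupp.single_eq_pi_single] using h (Finsupp.single i m)
  · intro f
    induction f using Finsupp.induction_linear with
    | zero => simp
    | add f g hf hg => simp [Finsupp.sum_add_index', hf, hg]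
    | single i m => simpa [Finsupp.single_eq_pi_single] using h i m

section

variable {C : Type*} [Category.{v} C]

section

variable [HasZeroMorphisms C]

def piSingle [HasProducts.{w} C] (M : C) {I : Type w} (i : I) : M ⟶ ∏ᶜ fun _ : I => M :=
  Pi.lift fun j => if i = j then 𝟙 M else 0

theorem piSingle_π [HasProducts.{w} C] (M : C) {I : Type w} (i j : I) :
    piSingle M i ≫ Pi.π _ j = if i = j then 𝟙 M else 0 :=
  limit.lift_π _ _

theorem map_piSingle_comp_piComparison [HasProducts.{u} C] {S : Type u} [Ring S]
    (F : C ⥤ ModuleCat.{u} S) [F.PreservesZeroMorphisms] (M : C) {I : Type u} (i : I) :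
    F.map (piSingle M i) ≫ piComparison F _ =
      ModuleCat.ofHom (LinearMap.single S (fun _ : I => F.obj M) i) ≫
        (ModuleCat.piIsoPi _).inv := by
  refine Pi.hom_ext _ _ fun j => ?_
  rw [Category.assoc, piComparison_comp_π, ← F.map_comp, piSingle_π, Category.assoc,
    ModuleCat.piIsoPi_inv_kernel_ι]
  split_ifs with hij
  · subst hij
    ext m
    simp
  · ext m
    simp [Pi.single_eq_of_ne' hij]

end

variable [Preadditive C]

theorem ι_sumToProd [HasCoproducts.{w} C] [HasProducts.{w} C] (M : C) {I : Type w} (i : I) :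
    Sigma.ι _ i ≫ sumToProd M I = piSingle M i :=
  colimit.ι_desc _ _

theorem IsPureInjective.exists_piSingle_comp_eq_id [HasCoproducts.{w} C] [HasProducts.{w} C]
    {M : C} (hM : IsPureInjective.{w} M) (I : Type w) :
    ∃ g : (∏ᶜ fun _ : I => M) ⟶ M, ∀ i, piSingle M i ≫ g = 𝟙 M := by
  obtain ⟨g, hg⟩ := hM I
  exact ⟨g, fun i => by rw [← ι_sumToProd, Category.assoc, hg, Sigma.ι_desc]⟩

theorem IsPureInjective.modulePureInjective_obj [HasCoproducts.{u} C] [HasProducts.{u} C]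
    {S : Type u} [Ring S] (F : C ⥤ ModuleCat.{u} S) [F.PreservesZeroMorphisms]
    [∀ I : Type u, PreservesLimitsOfShape (Discrete I) F] {M : C}
    (hM : IsPureInjective.{u} M) : ModulePureInjective S (F.obj M) := by
  refine (modulePureInjective_iff S _).mpr fun I => ?_
  obtain ⟨g, hg⟩ := hM.exists_piSingle_comp_eq_id I
  let φ := (ModuleCat.piIsoPi _).inv ≫ inv (piComparison F fun _ : I => M) ≫ F.map g
  have hφ (i : I) : ModuleCat.ofHom (LinearMap.single S _ i) ≫ φ = 𝟙 (F.obj M) := by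
    rw [← Category.assoc, ← Category.assoc, ← map_piSingle_comp_piComparison]
    simp [← F.map_comp, hg]
  exact ⟨φ.hom, fun i m => LinearMap.congr_fun (congrArg ModuleCat.Hom.hom (hφ i)) m⟩

end

instance SheafOfModules.evaluation_additive {C : Type*} [Category C]
    {J : GrothendieckTopology C} (R : Sheaf J RingCat.{u}) (X : Cᵒᵖ) :
    (SheafOfModules.evaluation R X).Additive :=
  inferInstanceAs (SheafOfModules.forget R ⋙ PresheafOfModules.evaluation _ X).Additive

/-- Let `N` be a pure-injective sheaf of `O_X`-modules on a ringed
space `X` (pure-injective in the Jensen–Lenzing sense) and `U ⊆ X` an open set. Then the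
`O_X(U)`-module `N(U)` of sections over `U` is a pure-injective `O_X(U)`-module. -/
theorem sections_of_pureInjective_sheafOfModules
    (X : TopCat.{u}) (R : Sheaf (Opens.grothendieckTopology X) RingCat.{u})
    (N : SheafOfModules.{u} R) (hN : IsPureInjective.{u} N) (U : Opens X) :
    ModulePureInjective (R.val.obj (op U)) (N.val.obj (op U)) :=
  hN.modulePureInjective_obj (SheafOfModules.evaluation R (op U))

end
end

section
/- Let X be a ringed space, x ∈ X a point, and N a pure-injective module over the stalk ring O_{X,x}. Then the skyscraper sheaf ι_{x,*}(N) is a geometrically pure-injective O_X-module, i.e. Hom(−, ι_{x,*}(N)) is exact on all short exact sequences of O_X-modules that are pure-exact on every stalk. -/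
open TopologicalSpace CategoryTheory

universe u

namespace SheafPurity

/-! ## Purity for modules over a ring (via finite systems of linear equations) -/

/-- A linear map is a pure monomorphism if it is injective and every finite system of
linear equations with constants in `A` that is solvable in `B` is solvable in `A`. -/
def IsPureMono {R : Type u} [Ring R] {A B : Type u} [AddCommGroup A] [Module R A]
    [AddCommGroup B] [Module R B] (f : A →ₗ[R] B) : Prop :=
  Function.Injective f ∧
    ∀ (m n : ℕ) (G : Matrix (Fin m) (Fin n) R) (a : Fin m → A) (b : Fin n → B),
      (∀ i, (∑ j, G i j • b j) = f (a i)) →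
      ∃ a' : Fin n → A, ∀ i, (∑ j, G i j • a' j) = a i

/-- A module is pure-injective if every morphism to it extends along pure monomorphisms. -/
def PureInjectiveModule (R : Type u) [Ring R] (M : Type u) [AddCommGroup M]
    [Module R M] : Prop :=
  ∀ (A B : Type u) [AddCommGroup A] [Module R A] [AddCommGroup B] [Module R B]
    (f : A →ₗ[R] B), IsPureMono f → ∀ g : A →ₗ[R] M, ∃ h : B →ₗ[R] M, h.comp f = g

/-! ## Sheaves of rings and sheaves of modules on a topological space -/

variable (X : Type u) [TopologicalSpace X]

/-- The sheaf condition for a family of sections with restriction maps: compatible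
families of sections over a cover glue uniquely. -/
def IsSheafFamily (F : Opens X → Type u)
    (res : ∀ (U V : Opens X), V ≤ U → F U → F V) : Prop :=
  ∀ (ι : Type u) (U : Opens X) (V : ι → Opens X) (hU : U = iSup V) (s : ∀ i, F (V i)),
    (∀ (i j : ι) (W : Opens X) (hWi : W ≤ V i) (hWj : W ≤ V j),
      res (V i) W hWi (s i) = res (V j) W hWj (s j)) →
    ∃! t : F U, ∀ i, res U (V i) ((le_iSup V i).trans hU.ge) t = s i

/-- A sheaf of commutative rings on `X`; `X` together with such a sheaf is a ringed space. -/
structure RingSheaf where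
  obj : Opens X → Type u
  ring : ∀ U, CommRing (obj U)
  res : ∀ {U V : Opens X}, V ≤ U → obj U →+* obj V
  res_id : ∀ {U : Opens X} (s : obj U), res le_rfl s = s
  res_res : ∀ {U V W : Opens X} (h1 : W ≤ V) (h2 : V ≤ U) (s : obj U),
    res h1 (res h2 s) = res (h1.trans h2) s
  sheaf : IsSheafFamily X obj fun _ _ h s => res h s

attribute [instance] RingSheaf.ring

variable {X}

/-- A sheaf of `O`-modules on the ringed space `(X, O)`. -/
structure OMod (O : RingSheaf X) where
  obj : Opens X → Type u
  acg : ∀ U, AddCommGroup (obj U)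
  mod : ∀ U, Module (O.obj U) (obj U)
  res : ∀ {U V : Opens X}, V ≤ U → obj U →+ obj V
  res_id : ∀ {U : Opens X} (s : obj U), res le_rfl s = s
  res_res : ∀ {U V W : Opens X} (h1 : W ≤ V) (h2 : V ≤ U) (s : obj U),
    res h1 (res h2 s) = res (h1.trans h2) s
  res_smul : ∀ {U V : Opens X} (h : V ≤ U) (r : O.obj U) (m : obj U),
    res h (r • m) = O.res h r • res h m
  sheaf : IsSheafFamily X obj fun _ _ h s => res h s

attribute [instance] OMod.acg OMod.mod

variable {O : RingSheaf X}

/-- Morphisms of sheaves of `O`-modules. -/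
@[ext]
structure Hom (M N : OMod O) where
  app : ∀ U, M.obj U →ₗ[O.obj U] N.obj U
  naturality : ∀ {U V : Opens X} (h : V ≤ U) (m : M.obj U),
    N.res h (app U m) = app V (M.res h m)

instance : Category (OMod O) where
  Hom M N := Hom M N
  id M := ⟨fun _ => LinearMap.id, fun _ _ => rfl⟩
  comp f g := ⟨fun U => (g.app U).comp (f.app U), fun h m => by
    simp only [LinearMap.comp_apply]
    rw [g.naturality, f.naturality]⟩
  id_comp f := by apply Hom.ext; rfl
  comp_id f := by apply Hom.ext; rfl
  assoc f g h := by apply Hom.ext; rfl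

lemma hom_app {M N : OMod O} (f : M ⟶ N) (U : Opens X) : (f : Hom M N).app U = f.app U := rfl

@[simp] lemma comp_app {M N P : OMod O} (f : M ⟶ N) (g : N ⟶ P) (U : Opens X) (m : M.obj U) :
    (f ≫ g).app U m = g.app U (f.app U m) := rfl

@[simp] lemma id_app (M : OMod O) (U : Opens X) (m : M.obj U) :
    (Hom.app (𝟙 M) U) m = m := rfl

end SheafPurity

namespace SheafPurity

variable {X : Type u} [TopologicalSpace X] {O : RingSheaf X}

/-! ## Stalks -/

/-- An open neighbourhood of `x`. -/
structure Nbhd (x : X) where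
  U : Opens X
  mem : x ∈ U

instance (x : X) : Inhabited (Nbhd x) := ⟨⟨⊤, trivial⟩⟩

/-- Intersection of neighbourhoods. -/
def Nbhd.inf {x : X} (N₁ N₂ : Nbhd x) : Nbhd x := ⟨N₁.U ⊓ N₂.U, ⟨N₁.mem, N₂.mem⟩⟩

lemma Nbhd.inf_le_left {x : X} (N₁ N₂ : Nbhd x) : (N₁.inf N₂).U ≤ N₁.U := _root_.inf_le_left
lemma Nbhd.inf_le_right {x : X} (N₁ N₂ : Nbhd x) : (N₁.inf N₂).U ≤ N₂.U := _root_.inf_le_right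

/-- The germ relation. -/
def germRel (M : OMod O) (x : X) :
    (Σ N : Nbhd x, M.obj N.U) → (Σ N : Nbhd x, M.obj N.U) → Prop :=
  fun a b => ∃ (N : Nbhd x) (h₁ : N.U ≤ a.1.U) (h₂ : N.U ≤ b.1.U),
    M.res h₁ a.2 = M.res h₂ b.2

/-- The stalk of a sheaf of modules at a point. -/
def Stalk (M : OMod O) (x : X) : Type u := Quot (germRel M x)

/-- The germ of a section. -/
def germ {M : OMod O} {x : X} (N : Nbhd x) (s : M.obj N.U) : Stalk M x :=
  Quot.mk _ ⟨N, s⟩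

lemma germ_eq {M : OMod O} {x : X} {N₁ N₂ : Nbhd x} {s₁ : M.obj N₁.U} {s₂ : M.obj N₂.U}
    (N : Nbhd x) (h₁ : N.U ≤ N₁.U) (h₂ : N.U ≤ N₂.U)
    (h : M.res h₁ s₁ = M.res h₂ s₂) : germ N₁ s₁ = germ N₂ s₂ :=
  Quot.sound ⟨N, h₁, h₂, h⟩

lemma germ_res {M : OMod O} {x : X} {N₁ N₂ : Nbhd x} (h : N₂.U ≤ N₁.U) (s : M.obj N₁.U) :
    germ N₂ (M.res h s) = germ N₁ s :=
  germ_eq N₂ le_rfl h (by rw [M.res_id])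

lemma germ_surj {M : OMod O} {x : X} (t : Stalk M x) : ∃ (N : Nbhd x) (s : M.obj N.U), t = germ N s := by
  induction t using Quot.ind with
  | _ a => exact ⟨a.1, a.2, rfl⟩

/-- Lift a binary germ-compatible operation to stalks. -/
def lift₂ {M₁ M₂ : OMod O} {x : X} {γ : Sort*}
    (f : ∀ (N₁ : Nbhd x), M₁.obj N₁.U → ∀ (N₂ : Nbhd x), M₂.obj N₂.U → γ)
    (hl : ∀ N₁ s₁ N₁' s₁' N₂ s₂, germRel M₁ x ⟨N₁, s₁⟩ ⟨N₁', s₁'⟩ →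
      f N₁ s₁ N₂ s₂ = f N₁' s₁' N₂ s₂)
    (hr : ∀ N₁ s₁ N₂ s₂ N₂' s₂', germRel M₂ x ⟨N₂, s₂⟩ ⟨N₂', s₂'⟩ →
      f N₁ s₁ N₂ s₂ = f N₁ s₁ N₂' s₂') :
    Stalk M₁ x → Stalk M₂ x → γ :=
  Quot.lift
    (fun a => Quot.lift (fun b => f a.1 a.2 b.1 b.2)
      (fun b b' hb => hr a.1 a.2 b.1 b.2 b'.1 b'.2 hb))
    (fun a a' ha => funext fun t => by
      induction t using Quot.ind with
      | _ b => exact hl a.1 a.2 a'.1 a'.2 b.1 b.2 ha)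

@[simp] lemma lift₂_germ {M₁ M₂ : OMod O} {x : X} {γ : Sort*}
    (f : ∀ (N₁ : Nbhd x), M₁.obj N₁.U → ∀ (N₂ : Nbhd x), M₂.obj N₂.U → γ) (hl hr)
    (N₁ : Nbhd x) (s₁ : M₁.obj N₁.U) (N₂ : Nbhd x) (s₂ : M₂.obj N₂.U) :
    lift₂ (γ := γ) f hl hr (germ N₁ s₁) (germ N₂ s₂) = f N₁ s₁ N₂ s₂ := rfl

end SheafPurity

namespace SheafPurity

variable {X : Type u} [TopologicalSpace X] {O : RingSheaf X}

protected def Stalk.add {M : OMod O} {x : X} : Stalk M x → Stalk M x → Stalk M x :=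
  lift₂ (fun N₁ s₁ N₂ s₂ => germ (N₁.inf N₂)
      (M.res (N₁.inf_le_left N₂) s₁ + M.res (N₁.inf_le_right N₂) s₂))
    (by
      rintro N₁ s₁ N₁' s₁' N₂ s₂ ⟨W, h₁, h₂, he⟩
      refine germ_eq (W.inf N₂) (show (W.inf N₂).U ≤ (N₁.inf N₂).U from inf_le_inf_right _ h₁)
        (show (W.inf N₂).U ≤ (N₁'.inf N₂).U from inf_le_inf_right _ h₂) ?_
      simp only [map_add, M.res_res]
      congr 1
      rw [← M.res_res (W.inf_le_left N₂) h₁, he, M.res_res])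
    (by
      rintro N₁ s₁ N₂ s₂ N₂' s₂' ⟨W, h₁, h₂, he⟩
      refine germ_eq (N₁.inf W) (show (N₁.inf W).U ≤ (N₁.inf N₂).U from inf_le_inf_left _ h₁)
        (show (N₁.inf W).U ≤ (N₁.inf N₂').U from inf_le_inf_left _ h₂) ?_
      simp only [map_add, M.res_res]
      congr 1
      rw [← M.res_res (N₁.inf_le_right W) h₁, he, M.res_res])

protected def Stalk.neg {M : OMod O} {x : X} : Stalk M x → Stalk M x :=
  Quot.lift (fun a => germ a.1 (-a.2)) (by
    rintro a b ⟨W, h₁, h₂, he⟩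
    exact germ_eq W h₁ h₂ (by simp only [map_neg, he]))

@[simp] lemma add_germ {M : OMod O} {x : X} (N₁ N₂ : Nbhd x) (s₁ : M.obj N₁.U)
    (s₂ : M.obj N₂.U) : Stalk.add (germ N₁ s₁) (germ N₂ s₂) =
      germ (N₁.inf N₂) (M.res (N₁.inf_le_left N₂) s₁ + M.res (N₁.inf_le_right N₂) s₂) := rfl

@[simp] lemma neg_germ {M : OMod O} {x : X} (N : Nbhd x) (s : M.obj N.U) :
    Stalk.neg (germ N s) = germ N (-s) := rfl


section AddGroup
variable {M : OMod O} {x : X}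

set_option maxHeartbeats 1000000 in
lemma stalk_add_assoc (a b c : Stalk M x) :
    Stalk.add (Stalk.add a b) c = Stalk.add a (Stalk.add b c) := by
  obtain ⟨N₁, s₁, rfl⟩ := germ_surj a
  obtain ⟨N₂, s₂, rfl⟩ := germ_surj b
  obtain ⟨N₃, s₃, rfl⟩ := germ_surj c
  simp only [add_germ]
  refine germ_eq ((N₁.inf N₂).inf N₃) le_rfl (le_of_eq (inf_assoc _ _ _)) ?_
  simp only [map_add, M.res_res, add_assoc]

lemma stalk_zero_add (a : Stalk M x) :
    Stalk.add (germ (default : Nbhd x) 0) a = a := by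
  obtain ⟨N, s, rfl⟩ := germ_surj a
  simp only [add_germ]
  refine germ_eq ((default : Nbhd x).inf N) le_rfl (Nbhd.inf_le_right _ _) ?_
  simp only [map_add, map_zero, M.res_res, zero_add]

lemma stalk_add_zero (a : Stalk M x) :
    Stalk.add a (germ (default : Nbhd x) 0) = a := by
  obtain ⟨N, s, rfl⟩ := germ_surj a
  simp only [add_germ]
  refine germ_eq (N.inf (default : Nbhd x)) le_rfl (Nbhd.inf_le_left _ _) ?_
  simp only [map_add, map_zero, M.res_res, add_zero]

lemma stalk_add_comm (a b : Stalk M x) : Stalk.add a b = Stalk.add b a := by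
  obtain ⟨N₁, s₁, rfl⟩ := germ_surj a
  obtain ⟨N₂, s₂, rfl⟩ := germ_surj b
  simp only [add_germ]
  refine germ_eq (N₁.inf N₂) le_rfl (le_of_eq (inf_comm _ _)) ?_
  simp only [map_add, M.res_res, add_comm]

lemma stalk_neg_add_cancel (a : Stalk M x) :
    Stalk.add (Stalk.neg a) a = germ (default : Nbhd x) 0 := by
  obtain ⟨N, s, rfl⟩ := germ_surj a
  simp only [neg_germ, add_germ]
  refine germ_eq (N.inf N) le_rfl le_top ?_
  simp only [map_add, map_neg, map_zero, neg_add_cancel]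

instance : Add (Stalk M x) := ⟨Stalk.add⟩
instance : Neg (Stalk M x) := ⟨Stalk.neg⟩
instance : Zero (Stalk M x) := ⟨germ (default : Nbhd x) 0⟩

instance : AddCommGroup (Stalk M x) where
  add := (· + ·)
  neg := Neg.neg
  zero := 0
  add_assoc := stalk_add_assoc
  zero_add := stalk_zero_add
  add_zero := stalk_add_zero
  add_comm := stalk_add_comm
  neg_add_cancel := stalk_neg_add_cancel
  nsmul := nsmulRec
  nsmul_zero := fun _ => rfl
  nsmul_succ := fun _ _ => rfl
  zsmul := zsmulRec
  zsmul_zero' := fun _ => rfl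
  zsmul_succ' := fun _ _ => rfl
  zsmul_neg' := fun _ _ => rfl

end AddGroup

@[simp] lemma germ_add {M : OMod O} {x : X} (N : Nbhd x) (s t : M.obj N.U) :
    (germ N (s + t) : Stalk M x) = germ N s + germ N t := by
  show _ = Stalk.add _ _
  simp only [add_germ]
  exact germ_eq (N.inf N) (Nbhd.inf_le_left _ _) le_rfl (by simp [map_add, M.res_res])

@[simp] lemma germ_zero {M : OMod O} {x : X} (N : Nbhd x) :
    (germ N (0 : M.obj N.U) : Stalk M x) = 0 := by
  show _ = germ (default : Nbhd x) 0
  exact germ_eq N le_rfl le_top (by simp)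

end SheafPurity

namespace SheafPurity

variable {X : Type u} [TopologicalSpace X] {O : RingSheaf X}

section MoreStalk
variable {M : OMod O} {x : X}

@[simp] lemma add_germ' (N₁ N₂ : Nbhd x) (s₁ : M.obj N₁.U) (s₂ : M.obj N₂.U) :
    germ N₁ s₁ + germ N₂ s₂ =
      germ (N₁.inf N₂) (M.res (N₁.inf_le_left N₂) s₁ + M.res (N₁.inf_le_right N₂) s₂) := rfl

@[simp] lemma neg_germ' (N : Nbhd x) (s : M.obj N.U) :
    -(germ N s) = germ N (-s) := rfl

lemma zero_def : (0 : Stalk M x) = germ (default : Nbhd x) 0 := rfl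

end MoreStalk

/-- A sheaf of rings, regarded as a sheaf of modules over itself. -/
@[reducible] def RingSheaf.toOMod (O : RingSheaf X) : OMod O where
  obj := O.obj
  acg U := inferInstance
  mod U := inferInstance
  res h := (O.res h).toAddMonoidHom
  res_id := O.res_id
  res_res := O.res_res
  res_smul h r m := by simpa [smul_eq_mul] using map_mul (O.res h) r m
  sheaf := O.sheaf

/-- The stalk of the structure sheaf at a point. -/
abbrev RStalk (O : RingSheaf X) (x : X) : Type u := Stalk O.toOMod x

section RingStalk

variable {x : X}

@[simp] lemma rh_apply {α β : Type u} [NonAssocSemiring α] [NonAssocSemiring β]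
    (f : α →+* β) (a : α) : f.toAddMonoidHom a = f a := rfl

@[simp] lemma toOMod_res {U V : Opens X} (h : V ≤ U) (s : O.obj U) :
    O.toOMod.res h s = O.res h s := rfl

protected def RStalk.mul : RStalk O x → RStalk O x → RStalk O x :=
  lift₂ (fun N₁ s₁ N₂ s₂ => germ (N₁.inf N₂)
      (O.res (N₁.inf_le_left N₂) s₁ * O.res (N₁.inf_le_right N₂) s₂))
    (by
      rintro N₁ s₁ N₁' s₁' N₂ s₂ ⟨W, h₁, h₂, he⟩
      refine germ_eq (W.inf N₂) (show (W.inf N₂).U ≤ (N₁.inf N₂).U from inf_le_inf_right _ h₁)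
        (show (W.inf N₂).U ≤ (N₁'.inf N₂).U from inf_le_inf_right _ h₂) ?_
      have he' : O.res h₁ s₁ = O.res h₂ s₁' := he
      show O.res _ _ = O.res _ _
      simp only [map_mul, O.res_res]
      congr 1
      rw [← O.res_res (W.inf_le_left N₂) h₁, he', O.res_res])
    (by
      rintro N₁ s₁ N₂ s₂ N₂' s₂' ⟨W, h₁, h₂, he⟩
      refine germ_eq (N₁.inf W) (show (N₁.inf W).U ≤ (N₁.inf N₂).U from inf_le_inf_left _ h₁)
        (show (N₁.inf W).U ≤ (N₁.inf N₂').U from inf_le_inf_left _ h₂) ?_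
      have he' : O.res h₁ s₂ = O.res h₂ s₂' := he
      show O.res _ _ = O.res _ _
      simp only [map_mul, O.res_res]
      congr 1
      rw [← O.res_res (N₁.inf_le_right W) h₁, he', O.res_res])

instance : Mul (RStalk O x) := ⟨RStalk.mul⟩
instance : One (RStalk O x) := ⟨germ (M := O.toOMod) (default : Nbhd x) 1⟩

@[simp] lemma mul_germ (N₁ N₂ : Nbhd x) (s₁ : O.obj N₁.U) (s₂ : O.obj N₂.U) :
    (germ (M := O.toOMod) N₁ s₁) * (germ (M := O.toOMod) N₂ s₂) =
      germ (N₁.inf N₂) (O.res (N₁.inf_le_left N₂) s₁ * O.res (N₁.inf_le_right N₂) s₂) := rfl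

lemma one_def : (1 : RStalk O x) = germ (M := O.toOMod) (default : Nbhd x) 1 := rfl


section RingAx
variable {x : X}

lemma r_mul_assoc (a b c : RStalk O x) : a * b * c = a * (b * c) := by
  obtain ⟨N₁, s₁, rfl⟩ := germ_surj a
  obtain ⟨N₂, s₂, rfl⟩ := germ_surj b
  obtain ⟨N₃, s₃, rfl⟩ := germ_surj c
  simp only [mul_germ]
  refine germ_eq ((N₁.inf N₂).inf N₃) le_rfl (le_of_eq (inf_assoc _ _ _)) ?_
  simp only [rh_apply, map_mul, O.res_res, mul_assoc]

lemma r_one_mul (a : RStalk O x) : 1 * a = a := by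
  obtain ⟨N, s, rfl⟩ := germ_surj a
  rw [one_def]
  simp only [mul_germ]
  refine germ_eq ((default : Nbhd x).inf N) le_rfl (Nbhd.inf_le_right _ _) ?_
  simp only [rh_apply, map_mul, map_one, O.res_res, one_mul]

lemma r_mul_comm (a b : RStalk O x) : a * b = b * a := by
  obtain ⟨N₁, s₁, rfl⟩ := germ_surj a
  obtain ⟨N₂, s₂, rfl⟩ := germ_surj b
  simp only [mul_germ]
  refine germ_eq (N₁.inf N₂) le_rfl (le_of_eq (inf_comm _ _)) ?_
  simp only [rh_apply, map_mul, O.res_res, mul_comm]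

lemma r_mul_one (a : RStalk O x) : a * 1 = a := by
  rw [r_mul_comm, r_one_mul]

lemma r_left_distrib (a b c : RStalk O x) : a * (b + c) = a * b + a * c := by
  obtain ⟨N₁, s₁, rfl⟩ := germ_surj a
  obtain ⟨N₂, s₂, rfl⟩ := germ_surj b
  obtain ⟨N₃, s₃, rfl⟩ := germ_surj c
  simp only [add_germ' (M := O.toOMod), mul_germ]
  refine germ_eq (N₁.inf (N₂.inf N₃)) le_rfl
    (show (N₁.inf (N₂.inf N₃)).U ≤ _ from le_inf (inf_le_inf_left _ (Nbhd.inf_le_left _ _))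
      (inf_le_inf_left _ (Nbhd.inf_le_right _ _))) ?_
  simp only [rh_apply, map_mul, map_add, O.res_res, mul_add]

lemma r_right_distrib (a b c : RStalk O x) : (a + b) * c = a * c + b * c := by
  rw [r_mul_comm, r_left_distrib, r_mul_comm c a, r_mul_comm c b]

lemma r_zero_mul (a : RStalk O x) : 0 * a = 0 := by
  obtain ⟨N, s, rfl⟩ := germ_surj a
  rw [zero_def]
  simp only [mul_germ]
  refine germ_eq ((default : Nbhd x).inf N) le_rfl le_top ?_
  simp only [rh_apply, map_mul, map_zero, zero_mul]

lemma r_mul_zero (a : RStalk O x) : a * 0 = 0 := by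
  rw [r_mul_comm, r_zero_mul]

instance : CommRing (RStalk O x) where
  __ := (inferInstance : AddCommGroup (Stalk (O.toOMod) x))
  mul := (· * ·)
  one := 1
  mul_assoc := r_mul_assoc
  one_mul := r_one_mul
  mul_one := r_mul_one
  mul_comm := r_mul_comm
  left_distrib := r_left_distrib
  right_distrib := r_right_distrib
  zero_mul := r_zero_mul
  mul_zero := r_mul_zero

end RingAx

/-- The germ map for the structure sheaf, as a ring homomorphism. -/
def RingSheaf.germHom (O : RingSheaf X) {x : X} (N : Nbhd x) : O.obj N.U →+* RStalk O x where
  toFun s := germ (M := O.toOMod) N s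
  map_one' := by
    rw [one_def]
    exact germ_eq N le_rfl le_top (by simp only [rh_apply, map_one])
  map_mul' r s := by
    show germ (M := O.toOMod) N (r * s) = germ (M := O.toOMod) N r * germ (M := O.toOMod) N s
    rw [mul_germ]
    exact germ_eq (N.inf N) (Nbhd.inf_le_left _ _) le_rfl
      (by simp only [rh_apply, map_mul, O.res_res])
  map_zero' := by
    show germ (M := O.toOMod) N 0 = 0
    exact germ_zero (M := O.toOMod) N
  map_add' r s := by
    show germ (M := O.toOMod) N (r + s) = germ (M := O.toOMod) N r + germ (M := O.toOMod) N s
    exact germ_add (M := O.toOMod) N r s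

@[simp] lemma germHom_apply {x : X} (N : Nbhd x) (s : O.obj N.U) :
    O.germHom N s = germ (M := O.toOMod) N s := rfl

lemma germ_res_ring {x : X} {N₁ N₂ : Nbhd x} (h : N₂.U ≤ N₁.U) (s : O.obj N₁.U) :
    germ (M := O.toOMod) N₂ (O.res h s) = germ (M := O.toOMod) N₁ s :=
  germ_res (M := O.toOMod) h s

end RingStalk

end SheafPurity

namespace SheafPurity

variable {X : Type u} [TopologicalSpace X] {O : RingSheaf X}

section ModuleStalk

variable {M : OMod O} {x : X}

protected def Stalk.smul : RStalk O x → Stalk M x → Stalk M x :=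
  lift₂ (fun N₁ r N₂ s => germ (N₁.inf N₂)
      (O.res (N₁.inf_le_left N₂) r • M.res (N₁.inf_le_right N₂) s))
    (by
      rintro N₁ r N₁' r' N₂ s ⟨W, h₁, h₂, he⟩
      refine germ_eq (W.inf N₂) (show (W.inf N₂).U ≤ (N₁.inf N₂).U from inf_le_inf_right _ h₁)
        (show (W.inf N₂).U ≤ (N₁'.inf N₂).U from inf_le_inf_right _ h₂) ?_
      have he' : O.res h₁ r = O.res h₂ r' := he
      simp only [map_add, M.res_smul, M.res_res, O.res_res]
      congr 1
      rw [← O.res_res (W.inf_le_left N₂) h₁, he', O.res_res])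
    (by
      rintro N₁ r N₂ s N₂' s' ⟨W, h₁, h₂, he⟩
      refine germ_eq (N₁.inf W) (show (N₁.inf W).U ≤ (N₁.inf N₂).U from inf_le_inf_left _ h₁)
        (show (N₁.inf W).U ≤ (N₁.inf N₂').U from inf_le_inf_left _ h₂) ?_
      simp only [M.res_smul, M.res_res, O.res_res]
      congr 1
      rw [← M.res_res (N₁.inf_le_right W) h₁, he, M.res_res])

instance : SMul (RStalk O x) (Stalk M x) := ⟨Stalk.smul⟩

@[simp] lemma smul_germ (N₁ N₂ : Nbhd x) (r : O.obj N₁.U) (s : M.obj N₂.U) :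
    (germ (M := O.toOMod) N₁ r) • (germ N₂ s) =
      germ (N₁.inf N₂) (O.res (N₁.inf_le_left N₂) r • M.res (N₁.inf_le_right N₂) s) := rfl

lemma st_one_smul (a : Stalk M x) : (1 : RStalk O x) • a = a := by
  obtain ⟨N, s, rfl⟩ := germ_surj a
  rw [one_def]
  simp only [smul_germ]
  refine germ_eq ((default : Nbhd x).inf N) le_rfl (Nbhd.inf_le_right _ _) ?_
  simp only [M.res_smul, M.res_res, map_one, one_smul]

lemma st_mul_smul (r t : RStalk O x) (a : Stalk M x) : (r * t) • a = r • t • a := by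
  obtain ⟨N₁, r, rfl⟩ := germ_surj r
  obtain ⟨N₂, t, rfl⟩ := germ_surj t
  obtain ⟨N₃, s, rfl⟩ := germ_surj a
  simp only [mul_germ, smul_germ]
  refine germ_eq ((N₁.inf N₂).inf N₃) le_rfl (le_of_eq (inf_assoc _ _ _)) ?_
  simp only [rh_apply, M.res_smul, M.res_res, O.res_res, map_mul, mul_smul]

lemma st_smul_add (r : RStalk O x) (a b : Stalk M x) : r • (a + b) = r • a + r • b := by
  obtain ⟨N₁, rr, rfl⟩ := germ_surj r
  obtain ⟨N₂, s, rfl⟩ := germ_surj a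
  obtain ⟨N₃, t, rfl⟩ := germ_surj b
  simp only [add_germ', smul_germ]
  refine germ_eq (N₁.inf (N₂.inf N₃)) le_rfl
    (show (N₁.inf (N₂.inf N₃)).U ≤ _ from le_inf (inf_le_inf_left _ (Nbhd.inf_le_left _ _))
      (inf_le_inf_left _ (Nbhd.inf_le_right _ _))) ?_
  simp only [rh_apply, M.res_smul, M.res_res, O.res_res, map_add, smul_add]

lemma st_smul_zero (r : RStalk O x) : r • (0 : Stalk M x) = 0 := by
  obtain ⟨N, rr, rfl⟩ := germ_surj r
  rw [zero_def]
  simp only [smul_germ]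
  refine germ_eq (N.inf (default : Nbhd x)) le_rfl le_top ?_
  simp only [map_zero, smul_zero]

lemma st_add_smul (r t : RStalk O x) (a : Stalk M x) : (r + t) • a = r • a + t • a := by
  obtain ⟨N₁, rr, rfl⟩ := germ_surj r
  obtain ⟨N₂, tt, rfl⟩ := germ_surj t
  obtain ⟨N₃, s, rfl⟩ := germ_surj a
  simp only [add_germ', smul_germ]
  refine germ_eq ((N₁.inf N₂).inf N₃) le_rfl
    (show ((N₁.inf N₂).inf N₃).U ≤ _ from le_inf (inf_le_inf_right _ (Nbhd.inf_le_left _ _))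
      (inf_le_inf_right _ (Nbhd.inf_le_right _ _))) ?_
  simp only [rh_apply, M.res_smul, M.res_res, O.res_res, map_add, add_smul]

lemma st_zero_smul (a : Stalk M x) : (0 : RStalk O x) • a = 0 := by
  obtain ⟨N, s, rfl⟩ := germ_surj a
  rw [zero_def]
  simp only [smul_germ]
  refine germ_eq ((default : Nbhd x).inf N) le_rfl le_top ?_
  simp only [rh_apply, map_zero, zero_smul]

instance : Module (RStalk O x) (Stalk M x) where
  smul := (· • ·)
  one_smul := st_one_smul
  mul_smul := st_mul_smul
  smul_add := st_smul_add
  smul_zero := st_smul_zero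
  add_smul := st_add_smul
  zero_smul := st_zero_smul

lemma germ_smul (N : Nbhd x) (r : O.obj N.U) (s : M.obj N.U) :
    (germ N (r • s) : Stalk M x) = O.germHom N r • germ N s := by
  rw [germHom_apply]
  simp only [smul_germ]
  exact germ_eq (N.inf N) (Nbhd.inf_le_left _ _) le_rfl
    (by simp only [M.res_smul, M.res_res, O.res_res, rh_apply])

end ModuleStalk

/-- The underlying function of the map induced on stalks by a morphism. -/
def stalkMapFun {M N : OMod O} (f : Hom M N) (x : X) : Stalk M x → Stalk N x :=
  Quot.lift (fun a => germ a.1 (f.app _ a.2)) (by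
    rintro a b ⟨W, h₁, h₂, he⟩
    refine germ_eq W h₁ h₂ ?_
    rw [f.naturality, f.naturality, he])

@[simp] lemma stalkMapFun_germ {M N : OMod O} (f : Hom M N) (x : X)
    (Nb : Nbhd x) (s : M.obj Nb.U) :
    stalkMapFun f x (germ Nb s) = germ Nb (f.app Nb.U s) := rfl

/-- The map induced on stalks by a morphism of sheaves of modules, as a linear map
over the stalk of the structure sheaf. -/
def stalkMap {M N : OMod O} (f : M ⟶ N) (x : X) : Stalk M x →ₗ[RStalk O x] Stalk N x where
  toFun := stalkMapFun f x
  map_add' a b := by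
    obtain ⟨N₁, s₁, rfl⟩ := germ_surj a
    obtain ⟨N₂, s₂, rfl⟩ := germ_surj b
    simp only [add_germ', stalkMapFun_germ]
    refine germ_eq (N₁.inf N₂) le_rfl le_rfl ?_
    simp only [map_add, N.res_res, M.res_res, Hom.naturality]
  map_smul' r a := by
    obtain ⟨N₁, rr, rfl⟩ := germ_surj r
    obtain ⟨N₂, s, rfl⟩ := germ_surj a
    simp only [smul_germ, stalkMapFun_germ, RingHom.id_apply]
    refine germ_eq (N₁.inf N₂) le_rfl le_rfl ?_
    simp only [map_smul, N.res_smul, M.res_res, N.res_res, O.res_res, Hom.naturality]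

@[simp] lemma stalkMap_germ {M N : OMod O} (f : M ⟶ N) (x : X) (Nb : Nbhd x) (s : M.obj Nb.U) :
    stalkMap f x (germ Nb s) = germ Nb ((f : Hom M N).app Nb.U s) := rfl

/-! ## Geometric purity -/

/-- A morphism of sheaves of modules is a geometrically pure monomorphism if it is a
monomorphism (i.e. injective on sections) and the induced map on every stalk is a pure
monomorphism of modules over the stalk ring. -/
def IsGPureMono {M N : OMod O} (f : M ⟶ N) : Prop :=
  (∀ U, Function.Injective ((f : Hom M N).app U)) ∧
    ∀ x : X, IsPureMono (stalkMap f x)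

/-- A sheaf of modules is geometrically pure-injective if every morphism to it extends
along every geometrically pure monomorphism. -/
def GPureInjective (P : OMod O) : Prop :=
  ∀ (M N : OMod O) (f : M ⟶ N), IsGPureMono f →
    ∀ φ : M ⟶ P, ∃ ψ : N ⟶ P, f ≫ ψ = φ

end SheafPurity

namespace SheafPurity

variable {X : Type u} [TopologicalSpace X] {O : RingSheaf X}

/-! ## Skyscraper sheaves -/

section Sky

variable (x : X) (A : Type u) [AddCommGroup A] [Module (RStalk O x) A]

/-- The module structure on the sections of the skyscraper sheaf. -/
def skyModule (U : Opens X) : Module (O.obj U) (PLift (x ∈ U) → A) where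
  smul r f := fun h => (O.germHom ⟨U, h.down⟩ r) • f h
  one_smul f := funext fun h => by
    show O.germHom ⟨U, h.down⟩ 1 • f h = f h
    simp
  mul_smul r t f := funext fun h => by
    show O.germHom ⟨U, h.down⟩ (r * t) • f h =
      O.germHom ⟨U, h.down⟩ r • O.germHom ⟨U, h.down⟩ t • f h
    rw [map_mul, mul_smul]
  smul_zero r := funext fun h => by
    show O.germHom ⟨U, h.down⟩ r • (0 : A) = 0
    simp
  smul_add r f g := funext fun h => by
    show O.germHom ⟨U, h.down⟩ r • (f h + g h) =
      O.germHom ⟨U, h.down⟩ r • f h + O.germHom ⟨U, h.down⟩ r • g h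
    rw [smul_add]
  add_smul r t f := funext fun h => by
    show O.germHom ⟨U, h.down⟩ (r + t) • f h =
      O.germHom ⟨U, h.down⟩ r • f h + O.germHom ⟨U, h.down⟩ t • f h
    rw [map_add, add_smul]
  zero_smul f := funext fun h => by
    show O.germHom ⟨U, h.down⟩ 0 • f h = 0
    simp

/-- The skyscraper sheaf at `x` with value the `RStalk O x`-module `A`. -/
def sky : OMod O where
  obj U := PLift (x ∈ U) → A
  acg U := inferInstance
  mod U := skyModule x A U
  res {U V} h :=
    { toFun := fun f hv => f ⟨h hv.down⟩
      map_zero' := rfl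
      map_add' := fun _ _ => rfl }
  res_id _ := rfl
  res_res _ _ _ := rfl
  res_smul {U V} h r f := by
    funext hv
    show O.germHom ⟨U, h hv.down⟩ r • f ⟨h hv.down⟩ =
      O.germHom ⟨V, hv.down⟩ (O.res h r) • f ⟨h hv.down⟩
    rw [show O.germHom (x := x) ⟨V, hv.down⟩ (O.res h r) = O.germHom ⟨U, h hv.down⟩ r from
      germ_res_ring (N₁ := ⟨U, h hv.down⟩) (N₂ := ⟨V, hv.down⟩) h r]
  sheaf := by
    intro ι U V hU s compat
    have mem : ∀ (h : x ∈ U), ∃ i, x ∈ V i := fun h => Opens.mem_iSup.mp (hU ▸ h)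
    refine ⟨fun h => s (mem h.down).choose ⟨(mem h.down).choose_spec⟩,
      fun i => funext fun hv => ?_, ?_⟩
    · have hU' : x ∈ U := ((le_iSup V i).trans hU.ge) hv.down
      exact congrFun (compat (mem hU').choose i (V (mem hU').choose ⊓ V i)
        inf_le_left inf_le_right) ⟨⟨(mem hU').choose_spec, hv.down⟩⟩
    · intro y hy
      funext h
      obtain ⟨i, hi⟩ := mem h.down
      have h1 : y h = s i ⟨hi⟩ := congrFun (hy i) ⟨hi⟩
      have h2 : s (mem h.down).choose ⟨(mem h.down).choose_spec⟩ = s i ⟨hi⟩ :=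
        congrFun (compat _ i (V (mem h.down).choose ⊓ V i) inf_le_left inf_le_right)
          ⟨⟨(mem h.down).choose_spec, hi⟩⟩
      rw [h1, h2]

end Sky

/-- Functoriality of the skyscraper sheaf. -/
def skyMap {x : X} {A B : Type u} [AddCommGroup A] [Module (RStalk O x) A]
    [AddCommGroup B] [Module (RStalk O x) B] (φ : A →ₗ[RStalk O x] B) :
    (sky x A : OMod O) ⟶ (sky x B : OMod O) where
  app U :=
    { toFun := fun f h => φ (f h)
      map_add' := fun f g => funext fun h => by
        show φ (f h + g h) = φ (f h) + φ (g h)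
        rw [map_add]
      map_smul' := fun r f => funext fun h => by
        show φ (O.germHom ⟨U, h.down⟩ r • f h) = O.germHom ⟨U, h.down⟩ r • φ (f h)
        rw [map_smul] }
  naturality _ _ := rfl

/-- The skyscraper sheaf functor. -/
def skyFunctor (O : RingSheaf X) (x : X) : ModuleCat.{u} (RStalk O x) ⥤ OMod O where
  obj A := sky x A
  map φ := skyMap φ.hom
  map_id A := rfl
  map_comp φ ψ := rfl

end SheafPurity

namespace SheafPurity

variable {X : Type u} [TopologicalSpace X] {O : RingSheaf X}

/-! ## Direct image along the inclusion of an open subset -/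

/-- The direct image `ι_{U,*}(M|_U)` of the restriction of `M` to an open set `U`:
its sections over `V` are the sections of `M` over `U ⊓ V`. -/
def pushforwardInto (U : Opens X) (M : OMod O) : OMod O where
  obj V := M.obj (U ⊓ V)
  acg V := inferInstance
  mod V := Module.compHom _ (O.res (inf_le_right : U ⊓ V ≤ V))
  res {V W} h := M.res (inf_le_inf_left U h)
  res_id s := M.res_id s
  res_res h1 h2 s := M.res_res _ _ s
  res_smul {V W} h r m := by
    show M.res (inf_le_inf_left U h) (O.res (inf_le_right : U ⊓ V ≤ V) r • m) =
      O.res (inf_le_right : U ⊓ W ≤ W) (O.res h r) • M.res (inf_le_inf_left U h) m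
    rw [M.res_smul, O.res_res, O.res_res]
  sheaf := by
    intro ι V₀ V hV s compat
    obtain ⟨t, ht, huniq⟩ := M.sheaf ι (U ⊓ V₀) (fun i => U ⊓ V i)
      (by rw [hV, inf_iSup_eq]) s
      (by
        intro i j W hWi hWj
        have hW : W ≤ U ⊓ (V i ⊓ V j) :=
          le_inf (hWi.trans inf_le_left)
            (le_inf (hWi.trans inf_le_right) (hWj.trans inf_le_right))
        calc M.res hWi (s i)
            = M.res hW (M.res (inf_le_inf_left U inf_le_left) (s i)) := by
              rw [M.res_res]
          _ = M.res hW (M.res (inf_le_inf_left U inf_le_right) (s j)) :=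
              congrArg (M.res hW) (compat i j (V i ⊓ V j) inf_le_left inf_le_right)
          _ = M.res hWj (s j) := by rw [M.res_res])
    exact ⟨t, fun i => ht i, fun y hy => huniq y fun i => hy i⟩

/-- The unit morphism `M ⟶ ι_{U,*}(M|_U)`, given by restriction of sections. -/
def pushforwardUnit (U : Opens X) (M : OMod O) : M ⟶ pushforwardInto U M where
  app V :=
    { toFun := fun m => M.res (inf_le_right : U ⊓ V ≤ V) m
      map_add' := fun _ _ => map_add _ _ _
      map_smul' := fun r m => by
        show M.res (inf_le_right : U ⊓ V ≤ V) (r • m) = O.res (inf_le_right : U ⊓ V ≤ V) r • M.res _ m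
        rw [M.res_smul] }
  naturality {V W} h m := by
    show M.res _ (M.res _ m) = M.res _ (M.res _ m)
    rw [M.res_res, M.res_res]

/-! ## Binary products -/

/-- The binary product of two sheaves of modules. -/
def prod2 (M N : OMod O) : OMod O where
  obj U := M.obj U × N.obj U
  acg U := inferInstance
  mod U := inferInstance
  res {U V} h := (M.res h).prodMap (N.res h)
  res_id s := Prod.ext (M.res_id s.1) (N.res_id s.2)
  res_res h1 h2 s := Prod.ext (M.res_res h1 h2 s.1) (N.res_res h1 h2 s.2)
  res_smul h r m := Prod.ext (M.res_smul h r m.1) (N.res_smul h r m.2)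
  sheaf := by
    intro ι U V hU s compat
    obtain ⟨t₁, ht₁, hu₁⟩ := M.sheaf ι U V hU (fun i => (s i).1)
      (fun i j W hWi hWj => congrArg Prod.fst (compat i j W hWi hWj))
    obtain ⟨t₂, ht₂, hu₂⟩ := N.sheaf ι U V hU (fun i => (s i).2)
      (fun i j W hWi hWj => congrArg Prod.snd (compat i j W hWi hWj))
    refine ⟨(t₁, t₂), fun i => ?_, fun y hy => ?_⟩
    · exact Prod.ext (ht₁ i) (ht₂ i)
    · have h₁ : y.1 = t₁ := hu₁ y.1 fun i => congrArg Prod.fst (hy i)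
      have h₂ : y.2 = t₂ := hu₂ y.2 fun i => congrArg Prod.snd (hy i)
      exact Prod.ext h₁ h₂

/-- A sheaf of modules is trivial (zero) if all its section modules are trivial. -/
def IsZeroOMod (M : OMod O) : Prop := ∀ U, Subsingleton (M.obj U)

/-- An isomorphism of sheaves of modules. -/
structure OModIso (M N : OMod O) where
  hom : M ⟶ N
  inv : N ⟶ M
  hom_inv : hom ≫ inv = 𝟙 M
  inv_hom : inv ≫ hom = 𝟙 N

/-- A sheaf of modules is indecomposable if it is nonzero and in any direct sum
decomposition one of the summands is zero. -/
def IndecomposableOMod (M : OMod O) : Prop :=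
  (¬ IsZeroOMod M) ∧
    ∀ (A B : OMod O), Nonempty (OModIso M (prod2 A B)) → IsZeroOMod A ∨ IsZeroOMod B

/-- The canonical morphism from `M` to the skyscraper at `x` with value the stalk `M_x`. -/
def toSkyStalk (M : OMod O) (x : X) : M ⟶ (sky x (Stalk M x) : OMod O) where
  app U :=
    { toFun := fun m h => germ ⟨U, h.down⟩ m
      map_add' := fun m₁ m₂ => funext fun h => germ_add _ _ _
      map_smul' := fun r m => funext fun h => by
        show germ ⟨U, h.down⟩ (r • m) = O.germHom ⟨U, h.down⟩ r • germ ⟨U, h.down⟩ m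
        exact germ_smul _ _ _ }
  naturality {U V} h m := by
    funext hv
    show germ ⟨U, h hv.down⟩ m = germ ⟨V, hv.down⟩ (M.res h m)
    exact (germ_res (N₁ := ⟨U, h hv.down⟩) (N₂ := ⟨V, hv.down⟩) h m).symm

end SheafPurity

/-! The skyscraper functor at `x` is right adjoint to the stalk functor at `x`. Hence extending
`φ : M ⟶ ι_{x,*}(N)` along a g-pure monomorphism `f : M ⟶ M'` amounts to extending its transpose
`M_x → N` along the pure monomorphism `f_x : M_x → M'_x`, which is possible because `N` is
pure-injective. -/

namespace SheafPurity

variable {X : Type u} [TopologicalSpace X] {O : RingSheaf X} {x : X}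
  {A : Type u} [AddCommGroup A] [Module (RStalk O x) A]

lemma sky_add_apply {U : Opens X} (f g : (sky x A : OMod O).obj U) (hx : PLift (x ∈ U)) :
    (f + g) hx = f hx + g hx :=
  rfl

lemma sky_smul_apply {U : Opens X} (r : O.obj U) (f : (sky x A : OMod O).obj U)
    (hx : PLift (x ∈ U)) : (r • f) hx = O.germHom ⟨U, hx.down⟩ r • f hx :=
  rfl

lemma Hom.app_sky_res {M : OMod O} (φ : M ⟶ (sky x A : OMod O)) {U V : Opens X} (h : V ≤ U)
    (s : M.obj U) (hx : x ∈ V) :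
    (φ : Hom M (sky x A)).app U s ⟨h hx⟩ = (φ : Hom M (sky x A)).app V (M.res h s) ⟨hx⟩ :=
  congrFun ((φ : Hom M (sky x A)).naturality h s) ⟨hx⟩

def stalkDescFun {M : OMod O} (φ : M ⟶ (sky x A : OMod O)) : Stalk M x → A :=
  Quot.lift (fun a => (φ : Hom M (sky x A)).app a.1.U a.2 ⟨a.1.mem⟩) <| by
    rintro ⟨N₁, s₁⟩ ⟨N₂, s₂⟩ ⟨W, h₁, h₂, he⟩
    exact (φ.app_sky_res h₁ s₁ W.mem).trans (he ▸ (φ.app_sky_res h₂ s₂ W.mem).symm)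

@[simp] lemma stalkDescFun_germ {M : OMod O} (φ : M ⟶ (sky x A : OMod O)) (Nb : Nbhd x)
    (s : M.obj Nb.U) : stalkDescFun φ (germ Nb s) = (φ : Hom M (sky x A)).app Nb.U s ⟨Nb.mem⟩ :=
  rfl

def stalkDesc {M : OMod O} (φ : M ⟶ (sky x A : OMod O)) : Stalk M x →ₗ[RStalk O x] A where
  toFun := stalkDescFun φ
  map_add' a b := by
    obtain ⟨N₁, s₁, rfl⟩ := germ_surj a
    obtain ⟨N₂, s₂, rfl⟩ := germ_surj b
    simp only [add_germ', stalkDescFun_germ]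
    rw [map_add, sky_add_apply, φ.app_sky_res (N₁.inf_le_left N₂),
      φ.app_sky_res (N₁.inf_le_right N₂)]
  map_smul' r a := by
    obtain ⟨N₁, r, rfl⟩ := germ_surj r
    obtain ⟨N₂, s, rfl⟩ := germ_surj a
    simp only [smul_germ, stalkDescFun_germ, RingHom.id_apply]
    rw [map_smul, sky_smul_apply, φ.app_sky_res (N₁.inf_le_right N₂), germHom_apply,
      germ_res_ring]

lemma toSkyStalk_comp_skyMap_stalkDesc {M : OMod O} (φ : M ⟶ (sky x A : OMod O)) :
    toSkyStalk M x ≫ skyMap (stalkDesc φ) = φ :=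
  rfl

lemma comp_toSkyStalk {M N : OMod O} (f : M ⟶ N) :
    f ≫ toSkyStalk N x = toSkyStalk M x ≫ skyMap (stalkMap f x) :=
  rfl

lemma skyMap_comp {B C : Type u} [AddCommGroup B] [Module (RStalk O x) B] [AddCommGroup C]
    [Module (RStalk O x) C] (g : A →ₗ[RStalk O x] B) (h : B →ₗ[RStalk O x] C) :
    (skyMap g : (sky x A : OMod O) ⟶ sky x B) ≫ skyMap h = skyMap (h ∘ₗ g) :=
  rfl

end SheafPurity

open SheafPurity in
/-- Let `X` be a ringed space, `x ∈ X` a point, and `N` a pure-injective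
module over the stalk ring `O_{X,x}`. Then the skyscraper sheaf `ι_{x,*}(N)` is a
geometrically pure-injective `O_X`-module: `Hom(−, ι_{x,*}(N))` is exact on all short
exact sequences of `O_X`-modules that are pure-exact on every stalk. -/
theorem skyscraper_of_pureInjective_is_gPureInjective
    {X : Type u} [TopologicalSpace X] (O : RingSheaf X) (x : X)
    (N : Type u) [AddCommGroup N] [Module (RStalk O x) N]
    (hN : PureInjectiveModule (RStalk O x) N) :
    GPureInjective (sky x N : OMod O) := by
  intro M M' f hf φ
  obtain ⟨h, hh⟩ := hN (Stalk M x) (Stalk M' x) (stalkMap f x) (hf.2 x) (stalkDesc φ)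
  refine ⟨toSkyStalk M' x ≫ skyMap h, ?_⟩
  rw [← Category.assoc, comp_toSkyStalk, Category.assoc, skyMap_comp, hh,
    toSkyStalk_comp_skyMap_stalkDesc]
end
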